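/- arXiv:2111.12850 — 6 statements merged into one kernel-verified Lean document; each statement's English description precedes it below -/
import Mathlib

section
/- For any positive integer n and any probability p ∈ [0,1], the expected number of random-direction parking functions equals (n+1)^{n-1}; that is, the sum over all α ∈ {1,...,n}^n of the probability that α parks in the random-direction model equals (n+1)^{n-1}. -/
/-- The first spot in the list `l` not in `occ`, if any. -/
def firstFree (occ : Finset ℕ) (l : List ℕ) : Option ℕ :=
  l.find? (fun s => decide (s ∉ occ))

/-- Run a parking simulation: each car is a pair (preference, coin); `step`
decides where a car parks (or `none` if it fails). Returns `true` iff all cars park. -/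
def runPark (step : Finset ℕ → ℕ → Bool → Option ℕ) :
    List (ℕ × Bool) → Finset ℕ → Bool
  | [], _ => true
  | (a, b) :: rest, occ =>
    match step occ a b with
    | none => false
    | some s => runPark step rest (insert s occ)

/-- Run a parking simulation, returning the final set of occupied spots
(cars that fail to park simply do not park). -/
def runOcc (step : Finset ℕ → ℕ → Bool → Option ℕ) :
    List (ℕ × Bool) → Finset ℕ → Finset ℕ
  | [], occ => occ
  | (a, b) :: rest, occ =>
    match step occ a b with
    | none => runOcc step rest occ
    | some s => runOcc step rest (insert s occ)

/-- Random-direction step on spots `1,…,n`: if the preferred spot `a` is free, take it;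
otherwise if the coin says forward, take the first free spot among `a+1,…,n`;
otherwise take the first free spot among `a-1,…,1`. -/
def dirStep (n : ℕ) (occ : Finset ℕ) (a : ℕ) (fwd : Bool) : Option ℕ :=
  if a ∉ occ then some a
  else if fwd then firstFree occ (List.range' (a + 1) (n - a))
  else firstFree occ ((List.range' 1 (a - 1)).reverse)

/-- Random `k`-Naples step on spots `1,…,n`: if the preferred spot `a` is free, take it;
otherwise, if the coin says to back up, check spots `a-1, a-2, …, max(a-k,1)` one by one
taking the first free one; if none (or if the coin says not to back up), take the first
free spot among `a+1,…,n`. -/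
def naplesStep (n k : ℕ) (occ : Finset ℕ) (a : ℕ) (back : Bool) : Option ℕ :=
  if a ∉ occ then some a
  else
    let fwd := firstFree occ (List.range' (a + 1) (n - a))
    if back then
      match firstFree occ ((List.range' (max (a - k) 1) (min k (a - 1))).reverse) with
      | some s => some s
      | none => fwd
    else fwd

/-- Circular random-direction step on spots `1,…,n+1` arranged in a circle:
if the preferred spot `a` is free, take it; otherwise search clockwise
(`a+1, a+2, …` wrapping around) or counterclockwise according to the coin. -/
def circStep (n : ℕ) (occ : Finset ℕ) (a : ℕ) (cw : Bool) : Option ℕ :=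
  if a ∉ occ then some a
  else if cw then
    firstFree occ (List.range' (a + 1) (n + 1 - a) ++ List.range' 1 (a - 1))
  else
    firstFree occ ((List.range' 1 (a - 1)).reverse ++ (List.range' (a + 1) (n + 1 - a)).reverse)

/-- Whether all `n` cars with preferences `α` park in the random-direction model on spots
`1,…,n` with coins `b` (`b i = true` means car `i` searches forward when its spot is taken). -/
def parksDir (n : ℕ) (α : Fin n → ℕ) (b : Fin n → Bool) : Bool :=
  runPark (dirStep n) (List.ofFn (fun i => (α i, b i))) ∅

/-- Whether all `n` cars with preferences `α` park in the `k`-Naples model on spots `1,…,n`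
with coins `b` (`b i = true` means car `i` backs up when its spot is taken). -/
def parksNaples (n k : ℕ) (α : Fin n → ℕ) (b : Fin n → Bool) : Bool :=
  runPark (naplesStep n k) (List.ofFn (fun i => (α i, b i))) ∅

/-- The probability that all cars park in the random-direction model, where each car
whose spot is taken independently searches forward with probability `p` and backward
with probability `1 - p`. -/
noncomputable def probDir (n : ℕ) (p : ℝ) (α : Fin n → ℕ) : ℝ :=
  ∑ b : Fin n → Bool,
    (∏ i, if b i then p else 1 - p) * (if parksDir n α b then 1 else 0)

/-- The probability that all cars park in the random `k`-Naples model, where each car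
whose spot is taken independently backs up (up to) `k` spots with probability `p`. -/
noncomputable def probNaples (n k : ℕ) (p : ℝ) (α : Fin n → ℕ) : ℝ :=
  ∑ b : Fin n → Bool,
    (∏ i, if b i then p else 1 - p) * (if parksNaples n k α b then 1 else 0)

/-- The deterministic 1-Naples simulation for choices `β = (β₂,…,βₙ) ∈ {0,1}^{n-1}`:
car `i ≥ 2` backs up one spot first iff `β i = false` (i.e. `βᵢ = 0`); car 1's choice
is irrelevant since its preferred spot is always free. -/
def parksUnder (n : ℕ) (α : Fin n → ℕ) (β : Fin (n - 1) → Bool) : Bool :=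
  parksNaples n 1 α
    (fun i => if h : 0 < i.1 then !(β ⟨i.1 - 1, by have := i.2; omega⟩) else false)

/-- `g α`: the number of choice sequences `β ∈ {0,1}^{n-1}` under which `α` parks in the
deterministic 1-Naples simulation. -/
def g (n : ℕ) (α : Fin n → ℕ) : ℕ :=
  (Finset.univ.filter (fun β : Fin (n - 1) → Bool => parksUnder n α β = true)).card

/-- `α` is a parking function: every car parks when each car whose preferred spot is taken
only searches forward. -/
def forwardParks (n : ℕ) (α : Fin n → ℕ) : Bool :=
  parksNaples n 0 α (fun _ => false)

/-- `α` is a 1-Naples parking function: every car parks when each car whose preferred spot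
is taken always backs up one spot first. -/
def naplesParks (n : ℕ) (α : Fin n → ℕ) : Bool :=
  parksNaples n 1 α (fun _ => true)

/-- The expected number of random `k`-Naples parking functions on `n` cars. -/
noncomputable def T (k : ℕ) (p : ℝ) (n : ℕ) : ℝ :=
  ∑ α : Fin n → Fin n, probNaples n k p (fun i => (α i).1 + 1)

/-- The staircase preference list: `m t` copies of `t`, then `m (t-1)` copies of `t-1`,
…, down to `m 2` copies of `2`. -/
def stair (t : ℕ) (m : ℕ → ℕ) : List ℕ :=
  ((List.range' 2 (t - 1)).reverse).flatMap (fun j => List.replicate (m j) j)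

/-- The staircase condition on a preference tuple: `α₁ = α₂`, each entry decreases by
`0` or `1`, and `αₙ = 2`. -/
def Staircase {n : ℕ} (hn : 2 ≤ n) (α : Fin n → ℕ) : Prop :=
  α ⟨0, by omega⟩ = α ⟨1, by omega⟩ ∧
  (∀ i : ℕ, (h : i + 1 < n) →
    α ⟨i + 1, h⟩ = α ⟨i, by omega⟩ ∨ α ⟨i + 1, h⟩ + 1 = α ⟨i, by omega⟩) ∧
  α ⟨n - 1, by omega⟩ = 2

/-- The number of 1-Naples parking functions on `n` cars. -/
def Nnum (n : ℕ) : ℕ :=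
  (Finset.univ.filter
    (fun α : Fin n → Fin n => naplesParks n (fun i => (α i).1 + 1) = true)).card

/-!
Fix the coins. Add a spot `n + 1` and close the lot into a circle: in the circular process every
car parks, so each tuple in `[n+1]^n` leaves exactly one spot vacant. The circular process commutes
with rotating all preferences, so every spot is left vacant by the same number `(n+1)^(n-1)` of
tuples. For preferences in `[n]` the two processes agree until the first car that fails in the
linear lot, and that car parks in spot `n + 1` of the circle; so a tuple in `[n]^n` parks iff it
leaves spot `n + 1` vacant. The count thus does not depend on the coins, whose weights sum to `1`.
-/

open Finset

section FirstFree

variable {occ : Finset ℕ} {l : List ℕ}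

lemma firstFree_eq_some {s : ℕ} (h : firstFree occ l = some s) : s ∈ l ∧ s ∉ occ :=
  ⟨List.mem_of_find?_eq_some h, by simpa using List.find?_some h⟩

lemma exists_firstFree_eq_some {s : ℕ} (hs : s ∈ l) (hso : s ∉ occ) :
    ∃ t, firstFree occ l = some t := by
  rw [← Option.isSome_iff_exists, firstFree, List.find?_isSome]
  exact ⟨s, hs, by simpa using hso⟩

lemma firstFree_append_cons {x : ℕ} (hx : x ∉ occ) (r : List ℕ) :
    firstFree occ (l ++ x :: r) = (firstFree occ l).or (some x) := by
  simp [firstFree, List.find?_append, hx]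

lemma firstFree_map {f : ℕ → ℕ} {occ' : Finset ℕ}
    (h : ∀ s ∈ l, f s ∈ occ' ↔ s ∈ occ) :
    firstFree occ' (l.map f) = (firstFree occ l).map f := by
  rw [firstFree, firstFree, List.find?_map]
  exact congrArg _ (List.find?_congr fun s hs => by simp [h s hs])

end FirstFree

section RunOcc

lemma subset_runOcc (step : Finset ℕ → ℕ → Bool → Option ℕ) (L : List (ℕ × Bool))
    (occ : Finset ℕ) : occ ⊆ runOcc step L occ := by
  induction L generalizing occ with
  | nil => exact Subset.refl occ
  | cons q L ih =>
    obtain ⟨a, c⟩ := q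
    rw [runOcc]
    cases step occ a c with
    | none => exact ih occ
    | some s => exact (subset_insert s occ).trans (ih _)

lemma mem_runOcc_of_mem {step : Finset ℕ → ℕ → Bool → Option ℕ} {a : ℕ}
    (hstep : ∀ occ c, a ∉ occ → step occ a c = some a)
    {L : List (ℕ × Bool)} {c : Bool} (hL : (a, c) ∈ L) (occ : Finset ℕ) :
    a ∈ runOcc step L occ := by
  induction L generalizing occ with
  | nil => simp at hL
  | cons q L ih =>
    rcases List.mem_cons.1 hL with rfl | htail
    · by_cases ha : a ∈ occ
      · exact subset_runOcc _ _ _ ha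
      · rw [runOcc, hstep occ c ha]
        exact subset_runOcc _ _ _ (mem_insert_self a occ)
    · obtain ⟨a', c'⟩ := q
      rw [runOcc]
      cases step occ a' c' with
      | none => exact ih htail occ
      | some s => exact ih htail _

end RunOcc

lemma range'_eq_concat_last {a n : ℕ} (ha : a ≤ n) :
    List.range' (a + 1) (n + 1 - a) = List.range' (a + 1) (n - a) ++ [n + 1] := by
  rw [show n + 1 - a = n - a + 1 by omega, List.range'_concat]
  congr 2
  omega

section Circle

variable {n : ℕ}

def circRot (n a : ℕ) : ℕ := if a = n + 1 then 1 else a + 1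

lemma circRot_mem_image_iff {a : ℕ} {occ : Finset ℕ} (ha : a ∈ Icc 1 (n + 1))
    (hocc : occ ⊆ Icc 1 (n + 1)) : circRot n a ∈ occ.image (circRot n) ↔ a ∈ occ := by
  refine ⟨fun h => ?_, mem_image_of_mem _⟩
  obtain ⟨x, hx, hxa⟩ := mem_image.1 h
  have hx' := mem_Icc.1 (hocc hx)
  rw [mem_Icc] at ha
  have hxa' : x = a := by
    unfold circRot at hxa
    split_ifs at hxa <;> omega
  exact hxa' ▸ hx

def cwList (n a : ℕ) : List ℕ := List.range' (a + 1) (n + 1 - a) ++ List.range' 1 (a - 1)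

def circSearch (n a : ℕ) (cw : Bool) : List ℕ := if cw then cwList n a else (cwList n a).reverse

lemma circStep_eq (occ : Finset ℕ) (a : ℕ) (cw : Bool) :
    circStep n occ a cw = if a ∉ occ then some a else firstFree occ (circSearch n a cw) := by
  unfold circStep circSearch cwList
  cases cw <;> simp [List.reverse_append]

lemma mem_circSearch {a s : ℕ} (cw : Bool) (ha : a ∈ Icc 1 (n + 1)) :
    s ∈ circSearch n a cw ↔ s ∈ Icc 1 (n + 1) ∧ s ≠ a := by
  have hcw : s ∈ circSearch n a cw ↔ s ∈ cwList n a := by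
    cases cw <;> simp [circSearch]
  rw [mem_Icc] at ha
  rw [hcw, mem_Icc]
  simp only [cwList, List.mem_append, List.mem_range'_1]
  omega

lemma map_circRot_range' {s k : ℕ} (hk : s + k ≤ n + 1) :
    (List.range' s k).map (circRot n) = List.range' (s + 1) k := by
  have hrot : ∀ x ∈ List.range' s k, circRot n x = 1 + x := by
    intro x hx
    rw [List.mem_range'_1] at hx
    unfold circRot
    split <;> omega
  rw [List.map_congr_left hrot, List.map_add_range', Nat.add_comm]

lemma cwList_circRot {a : ℕ} (ha : a ∈ Icc 1 (n + 1)) :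
    cwList n (circRot n a) = (cwList n a).map (circRot n) := by
  rw [mem_Icc] at ha
  unfold cwList
  by_cases hlast : a = n + 1
  · subst hlast
    simp [circRot, map_circRot_range' (n := n) (s := 1) (k := n) (by omega)]
  · have hrot : circRot n a = a + 1 := if_neg hlast
    obtain ⟨m, rfl⟩ : ∃ m, a = m + 1 := ⟨a - 1, by omega⟩
    rw [range'_eq_concat_last (a := m + 1) (by omega), hrot, List.map_append, List.map_append,
      map_circRot_range' (by omega), map_circRot_range' (by omega),
      show m + 1 + 1 - 1 = m + 1 by omega, List.range'_succ]
    simp [circRot, show n + 1 - (m + 1 + 1) = n - (m + 1) by omega]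

lemma circSearch_circRot {a : ℕ} (cw : Bool) (ha : a ∈ Icc 1 (n + 1)) :
    circSearch n (circRot n a) cw = (circSearch n a cw).map (circRot n) := by
  cases cw <;> simp [circSearch, cwList_circRot ha, List.map_reverse]

end Circle

section CircularProcess

variable {n : ℕ} {occ : Finset ℕ} {a : ℕ}

lemma circStep_spec {s : ℕ} {cw : Bool} (ha : a ∈ Icc 1 (n + 1))
    (h : circStep n occ a cw = some s) : s ∈ Icc 1 (n + 1) ∧ s ∉ occ := by
  rw [circStep_eq] at h
  split_ifs at h with hfree
  · obtain ⟨hs, hso⟩ := firstFree_eq_some h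
    exact ⟨((mem_circSearch cw ha).1 hs).1, hso⟩
  · cases h
    exact ⟨ha, hfree⟩

lemma exists_circStep_eq_some (cw : Bool) (hcard : #occ ≤ n)
    (ha : a ∈ Icc 1 (n + 1)) : ∃ s, circStep n occ a cw = some s := by
  rw [circStep_eq]
  split_ifs with hocc_a
  · obtain ⟨t, ht, hto⟩ : ∃ t ∈ Icc 1 (n + 1), t ∉ occ := by
      by_contra! h
      have := card_le_card h
      simp only [Nat.card_Icc] at this
      omega
    exact exists_firstFree_eq_some
      ((mem_circSearch cw ha).2 ⟨ht, fun h => hto (h ▸ hocc_a)⟩) hto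
  · exact ⟨a, rfl⟩

lemma circStep_circRot (cw : Bool) (hocc : occ ⊆ Icc 1 (n + 1)) (ha : a ∈ Icc 1 (n + 1)) :
    circStep n (occ.image (circRot n)) (circRot n a) cw =
      (circStep n occ a cw).map (circRot n) := by
  simp only [circStep_eq, circRot_mem_image_iff ha hocc, circSearch_circRot cw ha]
  split_ifs
  · exact firstFree_map fun s hs => circRot_mem_image_iff ((mem_circSearch cw ha).1 hs).1 hocc
  · rfl

lemma runOcc_circStep_subset_and_card {L : List (ℕ × Bool)}
    (hL : ∀ q ∈ L, q.1 ∈ Icc 1 (n + 1))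
    (hocc : occ ⊆ Icc 1 (n + 1)) (hlen : #occ + L.length ≤ n + 1) :
    runOcc (circStep n) L occ ⊆ Icc 1 (n + 1) ∧
      #(runOcc (circStep n) L occ) = #occ + L.length := by
  induction L generalizing occ with
  | nil => exact ⟨hocc, rfl⟩
  | cons q L ih =>
    obtain ⟨a, c⟩ := q
    have ha := hL (a, c) List.mem_cons_self
    rw [List.length_cons] at hlen ⊢
    obtain ⟨s, hs⟩ := exists_circStep_eq_some (occ := occ) c (by omega) ha
    obtain ⟨hsI, hso⟩ := circStep_spec ha hs
    rw [runOcc, hs]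
    dsimp only
    have := ih (fun q hq => hL q (List.mem_cons_of_mem _ hq)) (insert_subset hsI hocc)
      (by rw [card_insert_of_notMem hso]; omega)
    rw [card_insert_of_notMem hso] at this
    exact ⟨this.1, by omega⟩

lemma runOcc_circStep_circRot {L : List (ℕ × Bool)} (hL : ∀ q ∈ L, q.1 ∈ Icc 1 (n + 1))
    (hocc : occ ⊆ Icc 1 (n + 1)) :
    runOcc (circStep n) (L.map fun q => (circRot n q.1, q.2)) (occ.image (circRot n)) =
      (runOcc (circStep n) L occ).image (circRot n) := by
  induction L generalizing occ with
  | nil => rfl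
  | cons q L ih =>
    obtain ⟨a, c⟩ := q
    have ha := hL (a, c) List.mem_cons_self
    have hL' := fun q hq => hL q (List.mem_cons_of_mem (a, c) hq)
    rw [List.map_cons, runOcc, runOcc, circStep_circRot c hocc ha]
    cases hs : circStep n occ a c with
    | none => exact ih hL' hocc
    | some s =>
      rw [Option.map_some]
      dsimp only
      rw [← image_insert]
      exact ih hL' (insert_subset (circStep_spec ha hs).1 hocc)

end CircularProcess

section LinearVsCircular

variable {n : ℕ} {occ : Finset ℕ} {a : ℕ}

lemma circStep_eq_dirStep_or (hocc : occ ⊆ Icc 1 n) (ha : a ≤ n) (c : Bool) :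
    circStep n occ a c = (dirStep n occ a c).or (some (n + 1)) := by
  have hlast : n + 1 ∉ occ := fun h => by simpa using hocc h
  unfold circStep dirStep
  split_ifs
  · rw [range'_eq_concat_last ha, List.append_assoc, List.singleton_append,
      firstFree_append_cons hlast]
  · rw [range'_eq_concat_last ha, List.reverse_append, List.reverse_singleton,
      List.singleton_append, firstFree_append_cons hlast]
  · rfl

lemma dirStep_mem_Icc {s : ℕ} {c : Bool} (ha : a ∈ Icc 1 n) (h : dirStep n occ a c = some s) :
    s ∈ Icc 1 n := by
  rw [mem_Icc] at *
  unfold dirStep at h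
  split_ifs at h
  · have hs := (firstFree_eq_some h).1
    rw [List.mem_range'_1] at hs
    omega
  · have hs := (firstFree_eq_some h).1
    rw [List.mem_reverse, List.mem_range'_1] at hs
    omega
  · cases h
    exact ha

lemma runPark_dirStep_iff {L : List (ℕ × Bool)} (hL : ∀ q ∈ L, q.1 ∈ Icc 1 n)
    (hocc : occ ⊆ Icc 1 n) :
    runPark (dirStep n) L occ = true ↔ n + 1 ∉ runOcc (circStep n) L occ := by
  induction L generalizing occ with
  | nil => simpa [runPark, runOcc] using fun h => by simpa using hocc h
  | cons q L ih =>
    obtain ⟨a, c⟩ := q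
    have ha := hL (a, c) List.mem_cons_self
    rw [runPark, runOcc, circStep_eq_dirStep_or hocc (mem_Icc.1 ha).2 c]
    cases hs : dirStep n occ a c with
    | none => simpa using subset_runOcc _ _ _ (mem_insert_self _ _)
    | some s =>
      exact ih (fun q hq => hL q (List.mem_cons_of_mem _ hq))
        (insert_subset (dirStep_mem_Icc ha hs) hocc)

end LinearVsCircular

section Counting

variable {n : ℕ} (b : Fin n → Bool)

def circPrefs (α : Fin n → Fin (n + 1)) : List (ℕ × Bool) :=
  List.ofFn fun i => ((α i : ℕ) + 1, b i)

def circOcc (α : Fin n → Fin (n + 1)) : Finset ℕ :=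
  runOcc (circStep n) (circPrefs b α) ∅

lemma circPrefs_mem_Icc (α : Fin n → Fin (n + 1)) :
    ∀ q ∈ circPrefs b α, q.1 ∈ Icc 1 (n + 1) := by
  intro q hq
  obtain ⟨i, rfl⟩ := List.mem_ofFn.1 hq
  have := (α i).isLt
  simp only [mem_Icc]
  omega

lemma circOcc_subset_and_card (α : Fin n → Fin (n + 1)) :
    circOcc b α ⊆ Icc 1 (n + 1) ∧ #(circOcc b α) = n := by
  simpa [circOcc, circPrefs] using
    runOcc_circStep_subset_and_card (circPrefs_mem_Icc b α) (empty_subset _) (by simp [circPrefs])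

lemma circRot_val_add_one (x : Fin (n + 1)) :
    circRot n (x + 1) = ((x + 1 : Fin (n + 1)) : ℕ) + 1 := by
  rw [Fin.val_add_one]
  unfold circRot
  split_ifs with h1 h2 h2 <;> simp_all [Fin.ext_iff]

lemma circOcc_add_one (α : Fin n → Fin (n + 1)) :
    circOcc b (α + 1) = (circOcc b α).image (circRot n) := by
  have hprefs : circPrefs b (α + 1) = (circPrefs b α).map fun q => (circRot n q.1, q.2) := by
    simp [circPrefs, List.map_ofFn, Function.comp_def, circRot_val_add_one]
  simpa [circOcc, hprefs] using runOcc_circStep_circRot (circPrefs_mem_Icc b α) (empty_subset _)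

def vacant (s : ℕ) : Finset (Fin n → Fin (n + 1)) := {α | s ∉ circOcc b α}

lemma vacant_circRot {s : ℕ} (hs : s ∈ Icc 1 (n + 1)) :
    vacant b (circRot n s) = (vacant b s).map (Equiv.addRight 1).toEmbedding := by
  ext α
  obtain ⟨β, rfl⟩ : ∃ β, α = β + 1 := ⟨α - 1, by simp⟩
  simp [vacant, mem_map_equiv, circOcc_add_one,
    circRot_mem_image_iff hs (circOcc_subset_and_card b β).1]

lemma card_vacant_eq_card_vacant_one {s : ℕ} (hs : s ∈ Icc 1 (n + 1)) :
    #(vacant b s) = #(vacant b 1) := by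
  obtain ⟨hs1, hsn⟩ := mem_Icc.1 hs
  induction s, hs1 using Nat.le_induction with
  | base => rfl
  | succ s hs1 ih =>
    have hrot : circRot n s = s + 1 := if_neg (by omega)
    rw [← hrot, vacant_circRot b (mem_Icc.2 ⟨hs1, by omega⟩), card_map]
    exact ih (mem_Icc.2 ⟨hs1, by omega⟩) (by omega)

lemma sum_card_vacant : ∑ s ∈ Icc 1 (n + 1), #(vacant b s) = (n + 1) ^ n := by
  calc ∑ s ∈ Icc 1 (n + 1), #(vacant b s)
      = ∑ s ∈ Icc 1 (n + 1), ∑ α, if s ∉ circOcc b α then 1 else 0 := by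
        simp only [vacant, card_filter]
    _ = ∑ α, ∑ s ∈ Icc 1 (n + 1), if s ∉ circOcc b α then 1 else 0 := sum_comm
    _ = ∑ _α : Fin n → Fin (n + 1), 1 := by
        refine sum_congr rfl fun α _ => ?_
        obtain ⟨hsub, hcard⟩ := circOcc_subset_and_card b α
        rw [← card_filter, ← sdiff_eq_filter, card_sdiff_of_subset hsub, hcard, Nat.card_Icc]
        omega
    _ = (n + 1) ^ n := by simp

lemma card_vacant_last : #(vacant b (n + 1)) = (n + 1) ^ (n - 1) := by
  have hlast := card_vacant_eq_card_vacant_one b (right_mem_Icc.2 (Nat.le_add_left 1 n))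
  refine Nat.eq_of_mul_eq_mul_left n.succ_pos ?_
  calc (n + 1) * #(vacant b (n + 1))
      = ∑ s ∈ Icc 1 (n + 1), #(vacant b s) := by
        rw [sum_congr rfl fun s hs => (card_vacant_eq_card_vacant_one b hs).trans hlast.symm,
          sum_const, Nat.card_Icc, smul_eq_mul, Nat.add_sub_cancel]
    _ = (n + 1) ^ n := sum_card_vacant b
    _ = (n + 1) * (n + 1) ^ (n - 1) := by cases n <;> simp [pow_succ']

lemma parksDir_iff_mem_vacant_last (α : Fin n → Fin n) :
    parksDir n (fun i => (α i : ℕ) + 1) b = true ↔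
      Fin.castSucc ∘ α ∈ vacant b (n + 1) := by
  have hL : ∀ q ∈ circPrefs b (Fin.castSucc ∘ α), q.1 ∈ Icc 1 n := by
    intro q hq
    obtain ⟨i, rfl⟩ := List.mem_ofFn.1 hq
    have := (α i).isLt
    simp only [mem_Icc, Function.comp_apply, Fin.val_castSucc]
    omega
  rw [vacant, mem_filter_univ, circOcc, ← runPark_dirStep_iff hL (empty_subset _)]
  rfl

lemma val_lt_of_mem_vacant_last {β : Fin n → Fin (n + 1)} (hβ : β ∈ vacant b (n + 1))
    (i : Fin n) : (β i : ℕ) < n := by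
  by_contra! h
  have hβi : (β i : ℕ) + 1 = n + 1 := by omega
  refine (mem_filter.1 hβ).2 (mem_runOcc_of_mem (fun occ c h => ?_) (c := b i) ?_ ∅)
  · rw [circStep_eq, if_pos h]
  · rw [← hβi]
    exact List.mem_ofFn.2 ⟨i, rfl⟩

lemma card_parksDir :
    #{α : Fin n → Fin n | parksDir n (fun i => (α i : ℕ) + 1) b} = (n + 1) ^ (n - 1) := by
  rw [← card_vacant_last b, ← card_map Fin.castSuccEmb.arrowCongrRight]
  congr 1
  ext β
  simp only [mem_map, mem_filter, mem_univ, true_and, parksDir_iff_mem_vacant_last]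
  exact ⟨fun ⟨_, hα, hαβ⟩ => hαβ ▸ hα,
    fun hβ => ⟨fun i => ⟨β i, val_lt_of_mem_vacant_last b hβ i⟩, hβ, rfl⟩⟩

end Counting

lemma sum_prod_ite_eq_one {ι R : Type*} [Fintype ι] [DecidableEq ι] [CommRing R] (p : R) :
    ∑ b : ι → Bool, ∏ i, (if b i then p else 1 - p) = 1 := by
  rw [← Fintype.prod_sum (κ := fun _ => Bool) fun _ c => if c then p else 1 - p]
  simp

theorem stmt0_general (n : ℕ) (p : ℝ) :
    ∑ α : Fin n → Fin n, probDir n p (fun i => (α i).1 + 1) = (n + 1 : ℝ) ^ (n - 1) := by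
  calc ∑ α : Fin n → Fin n, probDir n p (fun i => (α i).1 + 1)
      = ∑ b : Fin n → Bool, (∏ i, if b i then p else 1 - p) *
          #{α : Fin n → Fin n | parksDir n (fun i => (α i : ℕ) + 1) b} := by
        simp only [probDir, sum_comm (γ := Fin n → Fin n), ← mul_sum, sum_boole]
    _ = ∑ b : Fin n → Bool, (∏ i, if b i then p else 1 - p) * (n + 1 : ℝ) ^ (n - 1) := by
        simp [card_parksDir]
    _ = (n + 1 : ℝ) ^ (n - 1) := by rw [← sum_mul, sum_prod_ite_eq_one, one_mul]

/-- For any positive `n` and `p ∈ [0,1]`, the expected number of random-direction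
parking functions equals `(n+1)^(n-1)`. -/
theorem stmt0 (n : ℕ) (hn : 0 < n) (p : ℝ) (hp0 : 0 ≤ p) (hp1 : p ≤ 1) :
    ∑ α : Fin n → Fin n, probDir n p (fun i => (α i).1 + 1) = (n + 1 : ℝ) ^ (n - 1) :=
  stmt0_general n p
end

section
/- Suppose α = (α_1,...,α_n) ∈ {1,...,n}^n parks under the choice sequence β = (β_2,...,β_n) ∈ {0,1}^{n−1} in the deterministic 1-Naples simulation. If β_i = 1 for some i, then α also parks under the sequence obtained from β by replacing β_i with 0. -/
/-!
Compare the run in which more cars back up with the original one through their occupied sets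
`o₂` and `o₁`. The invariant `TailLE n o₂ o₁` says that every tail `[t, n]` of the street holds
at most as many cars of `o₂` as of `o₁`, i.e. `o₂` is packed further to the left. A car that
parks at `s₂ ≤ s₁` preserves it. If instead `s₁ < s₂`, the forward search in `o₂` has crossed
a block `[s₁, s₂)` of `o₂` while `s₁ ∉ o₁`, so `o₂` is strictly lighter than `o₁` on every tail
starting in `(s₁, s₂]`. The same count shows that this search never runs off the street:
`[s₁, n]` full in `o₂` would force `s₁ ∈ o₁`.
-/

open Finset

namespace Naples

def tailCount (n : ℕ) (o : Finset ℕ) (t : ℕ) : ℕ := #(o ∩ Icc t n)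

lemma tailCount_insert {n : ℕ} {o : Finset ℕ} {s : ℕ} (hs : s ∉ o) (t : ℕ) :
    tailCount n (insert s o) t = tailCount n o t + if t ≤ s ∧ s ≤ n then 1 else 0 := by
  unfold tailCount
  split_ifs with hst
  · rw [insert_inter_of_mem (by simpa using hst), card_insert_of_notMem (by simp [hs])]
  · rw [insert_inter_of_notMem (by simpa using hst), add_zero]

lemma tailCount_succ_of_notMem {n : ℕ} {o : Finset ℕ} {s : ℕ} (hs : s ∉ o) :
    tailCount n o (s + 1) = tailCount n o s := by
  unfold tailCount
  congr 1
  ext x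
  simp only [mem_inter, mem_Icc]
  constructor
  · rintro ⟨hx, h₁, h₂⟩
    exact ⟨hx, by omega, h₂⟩
  · rintro ⟨hx, h₁, h₂⟩
    exact ⟨hx, lt_of_le_of_ne h₁ (by rintro rfl; exact hs hx), h₂⟩

lemma tailCount_le_add (n : ℕ) (o : Finset ℕ) (t u : ℕ) :
    tailCount n o t ≤ (u - t) + tailCount n o u :=
  calc #(o ∩ Icc t n) ≤ #(Ico t u ∪ o ∩ Icc u n) :=
        card_le_card fun x => by
          simp only [mem_union, mem_inter, mem_Icc, mem_Ico]
          rintro ⟨hx, h₁, h₂⟩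
          by_cases hxu : x < u
          · exact Or.inl ⟨h₁, hxu⟩
          · exact Or.inr ⟨hx, by omega, h₂⟩
    _ ≤ #(Ico t u) + #(o ∩ Icc u n) := card_union_le _ _
    _ = (u - t) + #(o ∩ Icc u n) := by rw [Nat.card_Ico]

lemma add_le_tailCount {n : ℕ} {o : Finset ℕ} {t u : ℕ} (htu : t ≤ u) (hu : u ≤ n + 1)
    (hfull : ∀ x, t ≤ x → x < u → x ∈ o) :
    (u - t) + tailCount n o u ≤ tailCount n o t :=
  calc (u - t) + #(o ∩ Icc u n) = #(Ico t u ∪ o ∩ Icc u n) := by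
        rw [card_union_of_disjoint, Nat.card_Ico]
        exact disjoint_left.2 fun x => by simp only [mem_inter, mem_Icc, mem_Ico]; omega
    _ ≤ #(o ∩ Icc t n) := card_le_card fun x => by
        simp only [mem_union, mem_inter, mem_Icc, mem_Ico]
        rintro (⟨h₁, h₂⟩ | ⟨hx, h₁, h₂⟩)
        · exact ⟨hfull x h₁ h₂, h₁, by omega⟩
        · exact ⟨hx, by omega, h₂⟩

def TailLE (n : ℕ) (o₂ o₁ : Finset ℕ) : Prop :=
  ∀ t, tailCount n o₂ t ≤ tailCount n o₁ t

lemma TailLE.insert_insert {n : ℕ} {o₁ o₂ : Finset ℕ} {s₁ s₂ : ℕ} (h : TailLE n o₂ o₁)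
    (hs₁ : s₁ ∉ o₁) (hs₂ : s₂ ∉ o₂) (hn : s₁ ≤ n)
    (hgap : ∀ t, s₁ < t → t ≤ s₂ → tailCount n o₂ t < tailCount n o₁ t) :
    TailLE n (insert s₂ o₂) (insert s₁ o₁) := by
  intro t
  rw [tailCount_insert hs₁, tailCount_insert hs₂]
  have := h t
  by_cases ht : s₁ < t ∧ t ≤ s₂
  · have := hgap t ht.1 ht.2
    split_ifs <;> omega
  · split_ifs <;> omega

lemma TailLE.tailCount_lt {n : ℕ} {o₁ o₂ : Finset ℕ} {s m : ℕ} (h : TailLE n o₂ o₁)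
    (hs : s ∉ o₁) (hm : m ≤ n + 1) (hfull : ∀ x, s ≤ x → x < m → x ∈ o₂)
    {t : ℕ} (hst : s < t) (htm : t ≤ m) :
    tailCount n o₂ t < tailCount n o₁ t := by
  have h₂ := add_le_tailCount (n := n) hst.le (by omega) fun x hx₁ hx₂ => hfull x hx₁ (by omega)
  have h₁ := tailCount_le_add n o₁ (s + 1) t
  have h₁' := tailCount_succ_of_notMem (n := n) hs
  have h₀ := h s
  omega

lemma firstFree_range'_eq_none {o : Finset ℕ} {s k : ℕ} (h : firstFree o (List.range' s k) = none) :
    ∀ x, s ≤ x → x < s + k → x ∈ o := by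
  intro x h₁ h₂
  simpa using List.find?_eq_none.1 h x (List.mem_range'_1.2 ⟨h₁, h₂⟩)

lemma firstFree_range'_eq_some {o : Finset ℕ} {s k m : ℕ}
    (h : firstFree o (List.range' s k) = some m) :
    s ≤ m ∧ m < s + k ∧ m ∉ o ∧ ∀ x, s ≤ x → x < m → x ∈ o := by
  obtain ⟨hm, i, hi, rfl, hbefore⟩ := List.find?_eq_some_iff_getElem.1 h
  simp only [List.length_range'] at hi
  simp only [List.getElem_range', decide_eq_true_eq] at hm ⊢
  refine ⟨by omega, by omega, hm, fun x h₁ h₂ => ?_⟩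
  simpa [Nat.add_sub_cancel' h₁] using hbefore (x - s) (by omega)

lemma naplesStep_one_eq (n : ℕ) (o : Finset ℕ) (a : ℕ) (b : Bool) :
    naplesStep n 1 o a b =
      if a ∉ o then some a
      else if b ∧ 2 ≤ a ∧ a - 1 ∉ o then some (a - 1)
      else firstFree o (List.range' (a + 1) (n - a)) := by
  unfold naplesStep
  by_cases ha : a ∈ o
  · cases b
    · simp [ha]
    · rcases Nat.lt_or_ge a 2 with ha₂ | ha₂
      · simp [ha, firstFree, show min 1 (a - 1) = 0 by omega, ha₂.not_ge]
      · by_cases hprev : a - 1 ∈ o <;>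
          simp [ha, hprev, firstFree, show min 1 (a - 1) = 1 by omega,
            show max (a - 1) 1 = a - 1 by omega, ha₂]
  · simp [ha]

lemma naplesStep_one_spec {n : ℕ} {o : Finset ℕ} {a : ℕ} {b : Bool} {s : ℕ} (ha : a ≤ n)
    (h : naplesStep n 1 o a b = some s) :
    s ∉ o ∧ s ≤ n ∧ (a ≤ s ∨ (s + 1 = a ∧ a ∈ o ∧ b = true ∧ 2 ≤ a)) := by
  rw [naplesStep_one_eq] at h
  by_cases hfree : a ∈ o
  swap
  · rw [if_pos hfree, Option.some_inj] at h
    exact h ▸ ⟨hfree, ha, Or.inl le_rfl⟩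
  rw [if_neg (not_not.2 hfree)] at h
  by_cases hback : b = true ∧ 2 ≤ a ∧ a - 1 ∉ o
  · rw [if_pos hback, Option.some_inj] at h
    exact h ▸ ⟨hback.2.2, by omega, Or.inr ⟨by omega, hfree, hback.1, hback.2.1⟩⟩
  · rw [if_neg hback] at h
    obtain ⟨h₁, h₂, hs, -⟩ := firstFree_range'_eq_some h
    exact ⟨hs, by omega, Or.inl (by omega)⟩

lemma TailLE.tailCount_lt_of_mem_of_notMem {n : ℕ} {o₁ o₂ : Finset ℕ} (h : TailLE n o₂ o₁)
    {a : ℕ} (ha : a ≤ n) (ha₁ : a ∈ o₁) (ha₂ : a ∉ o₂) :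
    tailCount n o₂ a < tailCount n o₁ a := by
  have h₁ := add_le_tailCount (n := n) (u := a + 1) (Nat.le_add_right a 1) (by omega)
    fun x hx₁ hx₂ => (show x = a by omega) ▸ ha₁
  have h₂ := tailCount_succ_of_notMem (n := n) ha₂
  have h₃ := h (a + 1)
  omega

lemma TailLE.exists_firstFree {n : ℕ} {o₁ o₂ : Finset ℕ} (h : TailLE n o₂ o₁) {a s₁ : ℕ}
    (ha : a ≤ n) (hs₁ : s₁ ∉ o₁) (hs₁n : s₁ ≤ n) (hblock : ∀ x, s₁ ≤ x → x ≤ a → x ∈ o₂) :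
    ∃ s₂, firstFree o₂ (List.range' (a + 1) (n - a)) = some s₂ ∧
      TailLE n (insert s₂ o₂) (insert s₁ o₁) := by
  have hgap : ∀ m, m ≤ n + 1 → (∀ x, a + 1 ≤ x → x < m → x ∈ o₂) →
      ∀ t, s₁ < t → t ≤ m → tailCount n o₂ t < tailCount n o₁ t := by
    intro m hm hfwd t hst htm
    refine h.tailCount_lt hs₁ hm (fun x hx₁ hx₂ => ?_) hst htm
    rcases Nat.lt_or_ge a x with hx | hx
    · exact hfwd x hx hx₂
    · exact hblock x hx₁ hx
  cases hf : firstFree o₂ (List.range' (a + 1) (n - a)) with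
  | none =>
    have hfwd := firstFree_range'_eq_none hf
    have := hgap (n + 1) le_rfl (fun x hx₁ hx₂ => hfwd x hx₁ (by omega)) (n + 1) (by omega) le_rfl
    simp [tailCount] at this
  | some s₂ =>
    obtain ⟨-, hs₂n, hs₂, hfwd⟩ := firstFree_range'_eq_some hf
    exact ⟨s₂, rfl, h.insert_insert hs₁ hs₂ hs₁n (hgap s₂ (by omega) hfwd)⟩

lemma TailLE.exists_naplesStep_one {n : ℕ} {o₁ o₂ : Finset ℕ} (h : TailLE n o₂ o₁) {a : ℕ}
    (ha : a ≤ n) {b₁ b₂ : Bool} (hb : b₁ ≤ b₂) {s₁ : ℕ}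
    (hs₁ : naplesStep n 1 o₁ a b₁ = some s₁) :
    ∃ s₂, naplesStep n 1 o₂ a b₂ = some s₂ ∧ TailLE n (insert s₂ o₂) (insert s₁ o₁) := by
  obtain ⟨hs₁o, hs₁n, hs₁a⟩ := naplesStep_one_spec ha hs₁
  rw [naplesStep_one_eq]
  by_cases ha₂ : a ∈ o₂
  swap
  · refine ⟨a, if_pos ha₂, h.insert_insert hs₁o ha₂ hs₁n fun t hst hta => ?_⟩
    rcases hs₁a with _ | ⟨rfl, hao₁, -⟩
    · omega
    obtain rfl : t = s₁ + 1 := by omega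
    exact h.tailCount_lt_of_mem_of_notMem ha hao₁ ha₂
  rw [if_neg (not_not.2 ha₂)]
  split_ifs with hback
  · exact ⟨a - 1, rfl, h.insert_insert hs₁o hback.2.2 hs₁n fun t hst hta => by omega⟩
  refine h.exists_firstFree ha hs₁o hs₁n fun x hx₁ hx₂ => ?_
  rcases Nat.lt_or_ge x a with hx | hx
  · rcases hs₁a with _ | ⟨rfl, -, hb₁, h2a⟩
    · omega
    obtain rfl : x = s₁ := by omega
    by_contra hx₂
    exact hback ⟨Bool.le_iff_imp.1 hb hb₁, h2a, by simpa using hx₂⟩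
  · exact (show x = a by omega) ▸ ha₂

lemma TailLE.runPark_naplesStep_one {n : ℕ} {l₁ l₂ : List (ℕ × Bool)}
    (hl : List.Forall₂ (fun c₁ c₂ => c₁.1 = c₂.1 ∧ c₁.1 ≤ n ∧ c₁.2 ≤ c₂.2) l₁ l₂)
    {o₁ o₂ : Finset ℕ} (h : TailLE n o₂ o₁) (hrun : runPark (naplesStep n 1) l₁ o₁ = true) :
    runPark (naplesStep n 1) l₂ o₂ = true := by
  induction hl generalizing o₁ o₂ with
  | nil => rfl
  | @cons c₁ c₂ _ _ hc _ ih =>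
    obtain ⟨a, b₁⟩ := c₁
    obtain ⟨_, b₂⟩ := c₂
    obtain ⟨rfl, ha, hb⟩ := hc
    rw [runPark] at hrun ⊢
    cases hs₁ : naplesStep n 1 o₁ a b₁ with
    | none => simp [hs₁] at hrun
    | some s₁ =>
      rw [hs₁] at hrun
      obtain ⟨s₂, hs₂, h'⟩ := h.exists_naplesStep_one ha hb hs₁
      rw [hs₂]
      exact ih h' hrun

theorem parksNaples_one_mono {n : ℕ} {α : Fin n → ℕ} {b₁ b₂ : Fin n → Bool} (hα : ∀ i, α i ≤ n)
    (hb : b₁ ≤ b₂) (h : parksNaples n 1 α b₁ = true) : parksNaples n 1 α b₂ = true := by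
  refine TailLE.runPark_naplesStep_one ?_ (fun _ => le_rfl) h
  rw [List.ofFn_eq_map, List.ofFn_eq_map, List.forall₂_map_left_iff, List.forall₂_map_right_iff,
    List.forall₂_same]
  exact fun i _ => ⟨rfl, hα i, hb i⟩

end Naples

theorem stmt4_general (n : ℕ) (α : Fin n → Fin n) (β : Fin (n - 1) → Bool)
    (h : parksUnder n (fun i => (α i).1 + 1) β = true)
    (i : Fin (n - 1)) :
    parksUnder n (fun i => (α i).1 + 1) (Function.update β i false) = true := by
  refine Naples.parksNaples_one_mono (fun k => (α k).2) (fun k => ?_) h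
  dsimp only
  split_ifs
  · rw [Function.update_apply]
    split_ifs <;> simp
  · exact le_rfl

/-- If `α` parks under `β` and `β i = 1`, then `α` also parks after replacing `β i` by `0`. -/
theorem stmt4 (n : ℕ) (α : Fin n → Fin n) (β : Fin (n - 1) → Bool)
    (h : parksUnder n (fun i => (α i).1 + 1) β = true)
    (i : Fin (n - 1)) (hi : β i = true) :
    parksUnder n (fun i => (α i).1 + 1) (Function.update β i false) = true :=
  stmt4_general n α β h i
end

section
/- For a positive integer n and α ∈ {1,...,n}^n, the probability that α parks in the random 1-Naples model with p = 1/2 equals 1 if and only if α is a parking function. -/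
lemma probNaples_eq_one_iff {p : ℝ} (hp₀ : 0 < p) (hp₁ : p < 1) (n k : ℕ) (α : Fin n → ℕ) :
    probNaples n k p α = 1 ↔ ∀ b, parksNaples n k α b = true := by
  set w : (Fin n → Bool) → ℝ := fun b => ∏ i, if b i then p else 1 - p with hw
  have hw_pos : ∀ b, 0 < w b := fun b =>
    Finset.prod_pos fun i _ => by split <;> linarith
  have hw_sum : ∑ b, w b = 1 := by
    rw [hw, ← Fintype.prod_sum (fun (_ : Fin n) (c : Bool) => if c then p else 1 - p)]
    simp
  have hdefect : probNaples n k p α = 1 ↔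
      ∑ b, w b * (1 - if parksNaples n k α b then 1 else 0) = 0 := by
    simp only [mul_sub, mul_one, Finset.sum_sub_distrib, hw_sum, probNaples, w]
    constructor <;> intro h <;> linarith
  rw [hdefect, Finset.sum_eq_zero_iff_of_nonneg fun b _ => by
    have := hw_pos b; split <;> simp [this.le]]
  refine forall_congr' fun b => ?_
  have := (hw_pos b).ne'
  split <;> simp_all

lemma firstFree_eq_none_iff {occ : Finset ℕ} {l : List ℕ} :
    firstFree occ l = none ↔ ∀ s ∈ l, s ∈ occ := by
  simp [firstFree, List.find?_eq_none]

lemma firstFree_range'_eq_some {occ : Finset ℕ} {s₀ len s : ℕ}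
    (h : firstFree occ (List.range' s₀ len) = some s) :
    s₀ ≤ s ∧ s < s₀ + len ∧ s ∉ occ ∧ ∀ t, s₀ ≤ t → t < s → t ∈ occ := by
  induction len generalizing s₀ with
  | zero => simp [firstFree] at h
  | succ len ih =>
    rw [List.range'_succ] at h
    by_cases hs₀ : s₀ ∈ occ
    · simp only [firstFree, List.find?_cons, hs₀, not_true_eq_false, decide_false] at h
      obtain ⟨h₁, h₂, h₃, h₄⟩ := ih h
      refine ⟨by omega, by omega, h₃, fun t ht₁ ht₂ => ?_⟩
      rcases ht₁.eq_or_lt with rfl | ht₁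
      · exact hs₀
      · exact h₄ t ht₁ ht₂
    · simp only [firstFree, List.find?_cons, hs₀, not_false_eq_true, decide_true,
        Option.some.injEq] at h
      subst h
      exact ⟨le_rfl, by omega, hs₀, fun t ht₁ ht₂ => absurd ht₁ (by omega)⟩

lemma naplesStep_of_notMem {n k : ℕ} {occ : Finset ℕ} {a : ℕ} (b : Bool) (ha : a ∉ occ) :
    naplesStep n k occ a b = some a := by
  simp [naplesStep, ha]

lemma naplesStep_of_mem {n k : ℕ} {occ : Finset ℕ} {a : ℕ} (b : Bool) (ha : a ∈ occ) :
    naplesStep n k occ a b =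
      (if b then firstFree occ (List.range' (max (a - k) 1) (min k (a - 1))).reverse
        else none).or (firstFree occ (List.range' (a + 1) (n - a))) := by
  simp only [naplesStep, ha, not_true_eq_false, if_false]
  cases b <;> simp only [if_true, Bool.false_eq_true, if_false, Option.none_or]
  cases firstFree occ (List.range' (max (a - k) 1) (min k (a - 1))).reverse <;> rfl

lemma naplesStep_zero_eq_some {n : ℕ} {occ : Finset ℕ} {a s : ℕ} {b : Bool} (han : a ≤ n)
    (h : naplesStep n 0 occ a b = some s) : s ∉ occ ∧ a ≤ s ∧ s ≤ n := by
  by_cases ha : a ∈ occ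
  · rw [naplesStep_of_mem b ha] at h
    have hback : firstFree occ (List.range' (max (a - 0) 1) (min 0 (a - 1))).reverse = none := by
      simp [firstFree]
    rw [hback, ite_self, Option.none_or] at h
    obtain ⟨h₁, h₂, h₃, -⟩ := firstFree_range'_eq_some h
    exact ⟨h₃, by omega, by omega⟩
  · rw [naplesStep_of_notMem b ha, Option.some.injEq] at h
    exact h ▸ ⟨ha, le_rfl, han⟩

lemma naplesStep_eq_some {n k : ℕ} {occ : Finset ℕ} {a s : ℕ} {b : Bool}
    (h : naplesStep n k occ a b = some s) :
    s ≤ a ∨ ∀ t, a ≤ t → t < s → t ∈ occ := by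
  by_cases ha : a ∈ occ
  · rw [naplesStep_of_mem b ha, Option.or_eq_some_iff] at h
    rcases h with hback | ⟨-, hfwd⟩
    · left
      split_ifs at hback
      have := List.mem_of_find?_eq_some hback
      rw [List.mem_reverse, List.mem_range'_1] at this
      omega
    · right
      obtain ⟨-, -, -, hbefore⟩ := firstFree_range'_eq_some hfwd
      intro t hat hts
      rcases hat.eq_or_lt with rfl | hat
      · exact ha
      · exact hbefore t hat hts
  · rw [naplesStep_of_notMem b ha, Option.some.injEq] at h
    exact .inl h.ge

lemma naplesStep_eq_none {n k : ℕ} {occ : Finset ℕ} {a : ℕ} {b : Bool}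
    (h : naplesStep n k occ a b = none) : ∀ t, a ≤ t → t ≤ n → t ∈ occ := by
  by_cases ha : a ∈ occ
  · rw [naplesStep_of_mem b ha, Option.or_eq_none_iff, firstFree_eq_none_iff] at h
    intro t hat htn
    rcases hat.eq_or_lt with rfl | hat
    · exact ha
    · exact h.2 t (List.mem_range'_1.2 ⟨hat, by omega⟩)
  · simp [naplesStep_of_notMem b ha] at h

lemma runPark_congr {step step' : Finset ℕ → ℕ → Bool → Option ℕ} {l : List (ℕ × Bool)}
    (h : ∀ occ, ∀ p ∈ l, step occ p.1 p.2 = step' occ p.1 p.2) (occ : Finset ℕ) :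
    runPark step l occ = runPark step' l occ := by
  induction l generalizing occ with
  | nil => rfl
  | cons p l ih =>
    obtain ⟨a, b⟩ := p
    simp only [runPark, h occ (a, b) List.mem_cons_self]
    cases step' occ a b with
    | none => rfl
    | some s => exact ih (fun occ p hp => h occ p (List.mem_cons_of_mem _ hp)) _

lemma parksNaples_false (n k : ℕ) (α : Fin n → ℕ) :
    parksNaples n k α (fun _ => false) = forwardParks n α :=
  runPark_congr (fun occ p hp => by
    obtain ⟨i, rfl⟩ := List.mem_ofFn.1 hp
    rfl) ∅

lemma card_filter_add_countP_le_of_runPark_naplesStep_zero {n : ℕ} :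
    ∀ {l : List (ℕ × Bool)} {occ : Finset ℕ}, (∀ p ∈ l, p.1 ≤ n) → (∀ s ∈ occ, s ≤ n) →
      runPark (naplesStep n 0) l occ = true →
      ∀ m, (occ.filter (m < ·)).card + l.countP (fun p => m < p.1) ≤ n - m
  | [], occ, _, hocc, _, m => by
    have : occ.filter (m < ·) ⊆ Finset.Ioc m n := fun s hs => by
      rw [Finset.mem_filter] at hs
      exact Finset.mem_Ioc.2 ⟨hs.2, hocc s hs.1⟩
    simpa using Finset.card_le_card this
  | (a, b) :: l, occ, hl, hocc, hrun, m => by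
    cases hstep : naplesStep n 0 occ a b with
    | none => simp [runPark, hstep] at hrun
    | some s =>
      rw [runPark, hstep] at hrun
      obtain ⟨hs, has, hsn⟩ :=
        naplesStep_zero_eq_some (hl (a, b) List.mem_cons_self) hstep
      have ih := card_filter_add_countP_le_of_runPark_naplesStep_zero
        (fun p hp => hl p (List.mem_cons_of_mem _ hp))
        (fun t ht => (Finset.mem_insert.1 ht).elim (· ▸ hsn) (hocc t)) hrun m
      rw [Finset.filter_insert] at ih
      rw [List.countP_cons]
      by_cases hma : m < a
      · rw [if_pos (hma.trans_le has),
          Finset.card_insert_of_notMem (fun h => hs (Finset.mem_filter.1 h).1)] at ih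
        simp only [hma, decide_true, if_true]
        omega
      · simp only [hma, decide_false, Bool.false_eq_true, if_false, add_zero]
        refine le_trans ?_ ih
        gcongr
        split_ifs
        · exact Finset.subset_insert _ _
        · exact subset_rfl

/-- Spot `0` does not exist, so it counts as permanently free. -/
def HasRoom (n : ℕ) (occ : Finset ℕ) (l : List (ℕ × Bool)) : Prop :=
  ∀ m, (m = 0 ∨ m ∉ occ) → (occ.filter (m < ·)).card + l.countP (fun p => m < p.1) ≤ n - m

lemma exists_free_lt (occ : Finset ℕ) {a : ℕ} (ha : 1 ≤ a) :
    ∃ m < a, (m = 0 ∨ m ∉ occ) ∧ ∀ t, m < t → t < a → t ∈ occ := by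
  induction a, ha using Nat.le_induction with
  | base => exact ⟨0, one_pos, .inl rfl, fun t h₁ h₂ => absurd h₂ (by omega)⟩
  | succ a ha ih =>
    by_cases haocc : a ∈ occ
    · obtain ⟨m, hma, hm, hgap⟩ := ih
      refine ⟨m, by omega, hm, fun t h₁ h₂ => ?_⟩
      rcases Nat.lt_succ_iff_lt_or_eq.1 h₂ with h₂ | rfl
      · exact hgap t h₁ h₂
      · exact haocc
    · exact ⟨a, a.lt_succ_self, .inr haocc, fun t h₁ h₂ => absurd h₂ (by omega)⟩

lemma HasRoom.exists_free_ge {n : ℕ} {occ : Finset ℕ} {a : ℕ} {b : Bool}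
    {l : List (ℕ × Bool)} (h : HasRoom n occ ((a, b) :: l)) (ha : 1 ≤ a) :
    ∃ t, a ≤ t ∧ t ≤ n ∧ t ∉ occ := by
  by_contra! hfull
  obtain ⟨m, hma, hm, hgap⟩ := exists_free_lt occ ha
  have hsub : Finset.Ioc m n ⊆ occ.filter (m < ·) := fun t ht => by
    rw [Finset.mem_Ioc] at ht
    refine Finset.mem_filter.2 ⟨?_, ht.1⟩
    rcases lt_or_ge t a with hta | hat
    · exact hgap t ht.1 hta
    · exact hfull t hat ht.2
  have hcount := h m hm
  have := Finset.card_le_card hsub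
  simp only [Nat.card_Ioc, List.countP_cons, hma, decide_true, if_true] at hcount this
  omega

lemma HasRoom.insert {n : ℕ} {occ : Finset ℕ} {a s : ℕ} {b : Bool} {l : List (ℕ × Bool)}
    (h : HasRoom n occ ((a, b) :: l)) (ha : 1 ≤ a)
    (hs : s ≤ a ∨ ∀ t, a ≤ t → t < s → t ∈ occ) : HasRoom n (insert s occ) l := by
  intro m hm
  have hm' : m = 0 ∨ m ∉ occ := hm.imp_right fun h' h'' => h' (Finset.mem_insert_of_mem h'')
  have hcount := h m hm'
  rw [List.countP_cons] at hcount
  have hcard := Finset.card_insert_le s (occ.filter (m < ·))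
  rw [Finset.filter_insert]
  by_cases hma : m < a
  · simp only [hma, decide_true, if_true] at hcount
    split_ifs <;> omega
  · simp only [hma, decide_false, Bool.false_eq_true, if_false, add_zero] at hcount
    have hsm : ¬ m < s := fun hms => by
      rcases hs with hsa | hgap
      · omega
      · rcases hm with rfl | hm
        · omega
        · exact hm (Finset.mem_insert_of_mem (hgap m (by omega) hms))
    simpa [hsm] using hcount

theorem runPark_eq_true_of_hasRoom {n : ℕ} {step : Finset ℕ → ℕ → Bool → Option ℕ}
    (h_some : ∀ occ a b s, step occ a b = some s → s ≤ a ∨ ∀ t, a ≤ t → t < s → t ∈ occ)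
    (h_none : ∀ occ a b, step occ a b = none → ∀ t, a ≤ t → t ≤ n → t ∈ occ) :
    ∀ {l : List (ℕ × Bool)} {occ : Finset ℕ}, (∀ p ∈ l, 1 ≤ p.1) → HasRoom n occ l →
      runPark step l occ = true
  | [], _, _, _ => rfl
  | (a, b) :: l, occ, hl, hroom => by
    have ha := hl (a, b) List.mem_cons_self
    cases hstep : step occ a b with
    | none =>
      obtain ⟨t, hat, htn, ht⟩ := hroom.exists_free_ge ha
      exact absurd (h_none occ a b hstep t hat htn) ht
    | some s =>
      rw [runPark, hstep]
      exact runPark_eq_true_of_hasRoom h_some h_none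
        (fun p hp => hl p (List.mem_cons_of_mem _ hp))
        (hroom.insert ha (h_some occ a b s hstep))

lemma parksNaples_of_forwardParks {n : ℕ} (k : ℕ) {α : Fin n → ℕ}
    (hα : ∀ i, 1 ≤ α i ∧ α i ≤ n) (h : forwardParks n α = true) (b : Fin n → Bool) :
    parksNaples n k α b = true := by
  have hprefs : ∀ c : Fin n → Bool, ∀ p ∈ List.ofFn (fun i => (α i, c i)), 1 ≤ p.1 ∧ p.1 ≤ n :=
    fun c p hp => by
      obtain ⟨i, rfl⟩ := List.mem_ofFn.1 hp
      exact hα i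
  have hcount : ∀ c : Fin n → Bool, ∀ m,
      (List.ofFn (fun i => (α i, c i))).countP (fun p => m < p.1) =
        (List.ofFn α).countP (m < ·) := fun c m => by
    have hfst : List.ofFn α = (List.ofFn fun i => (α i, c i)).map Prod.fst := by
      rw [List.map_ofFn]
      rfl
    rw [hfst, List.countP_map]
    rfl
  have hroom := card_filter_add_countP_le_of_runPark_naplesStep_zero
    (fun p hp => (hprefs _ p hp).2) (by simp) h
  refine runPark_eq_true_of_hasRoom (fun _ _ _ _ => naplesStep_eq_some)
    (fun _ _ _ => naplesStep_eq_none) (fun p hp => (hprefs b p hp).1) fun m _ => ?_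
  simpa [hcount] using hroom m

theorem stmt5_general (n : ℕ) (α : Fin n → Fin n) :
    probNaples n 1 (1/2) (fun i => (α i).1 + 1) = 1 ↔
      forwardParks n (fun i => (α i).1 + 1) = true := by
  rw [probNaples_eq_one_iff (by norm_num) (by norm_num)]
  exact ⟨fun h => parksNaples_false n 1 _ ▸ h _,
    parksNaples_of_forwardParks 1 fun i => ⟨by omega, (α i).2⟩⟩

/-- `α` parks with probability 1 in the random 1-Naples model with `p = 1/2` iff `α` is a
parking function. -/
theorem stmt5 (n : ℕ) (hn : 0 < n) (α : Fin n → Fin n) :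
    probNaples n 1 (1/2) (fun i => (α i).1 + 1) = 1 ↔
      forwardParks n (fun i => (α i).1 + 1) = true :=
  stmt5_general n α
end

section
/- For a positive integer n and α ∈ {1,...,n}^n, the probability that α parks in the random 1-Naples model with p = 1/2 is positive if and only if α is a 1-Naples parking function (i.e., α parks when every car always backs up one spot before moving forward). -/
/-!
Compare an arbitrary run of the random 1-Naples process with the run in which every car backs
up, through their occupied sets `B` and `A`. The invariant is that no tail `[j, ∞)` holds more
cars of `A` than of `B`. A car with preference `a` that parks in `B` lands at `a`, at `a - 1` or
beyond `a`. The backing-up car parks in `A` as well: otherwise `A`, hence by the invariant also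
`B`, is full from `a - 1` to `n`, and the car would fail in `B`. Wherever the two cars land, the
invariant survives. So if some coin sequence parks every car, always backing up does; and as every
coin sequence has positive probability, this is exactly when the parking probability is positive.
-/

namespace NaplesParking

open Finset

def tailCount (S : Finset ℕ) (j : ℕ) : ℕ := #{x ∈ S | j ≤ x}

lemma tailCount_insert {s : ℕ} {S : Finset ℕ} (hs : s ∉ S) (j : ℕ) :
    tailCount (insert s S) j = tailCount S j + if j ≤ s then 1 else 0 := by
  unfold tailCount
  rw [filter_insert]
  split_ifs with hj
  · exact card_insert_of_notMem (by simp [hs])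
  · rfl

lemma tailCount_eq_add_card_inter_Ico {b j : ℕ} (hbj : b ≤ j) (S : Finset ℕ) :
    tailCount S b = tailCount S j + #(S ∩ Ico b j) := by
  unfold tailCount
  rw [← card_union_of_disjoint]
  · congr 1
    ext x
    by_cases hx : x ∈ S <;> simp [hx]
    omega
  · rw [disjoint_left]
    intro x hx hx'
    simp only [mem_filter, mem_inter, mem_Ico] at hx hx'
    omega

lemma tailCount_lt_of_Ico_subset {A B : Finset ℕ} {b j m : ℕ} (hbj : b ≤ j)
    (hA : Ico b j ⊆ A) (hm : m ∈ Ico b j) (hmB : m ∉ B)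
    (h : tailCount A b ≤ tailCount B b) : tailCount A j < tailCount B j := by
  have hAfull : #(A ∩ Ico b j) = j - b := by
    rw [inter_eq_right.mpr hA, Nat.card_Ico]
  have hBhole : #(B ∩ Ico b j) < j - b := by
    rw [← Nat.card_Ico]
    exact card_lt_card ⟨inter_subset_right, fun hsub => hmB (mem_of_mem_inter_left (hsub hm))⟩
  have := tailCount_eq_add_card_inter_Ico hbj A
  have := tailCount_eq_add_card_inter_Ico hbj B
  omega

lemma tailCount_lt_of_notMem_of_mem {A B : Finset ℕ} {j : ℕ} (hA : j ∉ A) (hB : j ∈ B)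
    (h : tailCount A (j + 1) ≤ tailCount B (j + 1)) : tailCount A j < tailCount B j := by
  have hsplit := fun S => tailCount_eq_add_card_inter_Ico (Nat.le_succ j) S
  rw [Nat.Ico_succ_singleton] at hsplit
  rw [hsplit A, hsplit B, inter_singleton_of_notMem hA, inter_singleton_of_mem hB]
  simpa using Nat.lt_succ_of_le h

lemma Icc_subset_of_tailCount_le {A B : Finset ℕ} {m n : ℕ} (hBn : ∀ x ∈ B, x ≤ n)
    (hA : Icc m n ⊆ A) (h : tailCount A m ≤ tailCount B m) : Icc m n ⊆ B := by
  have hsub : {x ∈ B | m ≤ x} ⊆ Icc m n := fun x hx => by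
    rw [mem_filter] at hx
    exact mem_Icc.mpr ⟨hx.2, hBn x hx.1⟩
  have hcard : #(Icc m n) ≤ #{x ∈ B | m ≤ x} :=
    calc #(Icc m n) ≤ tailCount A m :=
          card_le_card fun x hx => mem_filter.mpr ⟨hA hx, (mem_Icc.mp hx).1⟩
      _ ≤ _ := h
  rw [← eq_of_subset_of_card_le hsub hcard]
  exact filter_subset _ _

def TailLE (A B : Finset ℕ) : Prop := ∀ j, tailCount A j ≤ tailCount B j

lemma TailLE.insert {A B : Finset ℕ} {sA sB : ℕ} (h : TailLE A B) (hsA : sA ∉ A) (hsB : sB ∉ B)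
    (hstrict : ∀ j, sB < j → j ≤ sA → tailCount A j < tailCount B j) :
    TailLE (insert sA A) (insert sB B) := by
  intro j
  rw [tailCount_insert hsA, tailCount_insert hsB]
  have := h j
  by_cases hj : sB < j ∧ j ≤ sA
  · have := hstrict j hj.1 hj.2
    split_ifs <;> omega
  · split_ifs <;> omega

lemma tailLE_empty : TailLE ∅ ∅ := fun _ => le_rfl

lemma firstFree_range'_eq_some {occ : Finset ℕ} {m len s : ℕ}
    (h : firstFree occ (List.range' m len) = some s) :
    s ∉ occ ∧ m ≤ s ∧ s < m + len ∧ ∀ x, m ≤ x → x < s → x ∈ occ := by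
  obtain ⟨hs, hmem, hbefore⟩ := List.find?_range'_eq_some.mp h
  rw [List.mem_range'_1] at hmem
  refine ⟨by simpa using hs, hmem.1, hmem.2, fun x hx hxs => ?_⟩
  simpa using hbefore x hx hxs

lemma firstFree_range'_eq_none {occ : Finset ℕ} {m len : ℕ}
    (h : firstFree occ (List.range' m len) = none) : ∀ x, m ≤ x → x < m + len → x ∈ occ :=
  fun x hx hxl => by simpa using List.find?_eq_none.mp h x (List.mem_range'_1.mpr ⟨hx, hxl⟩)

lemma naplesStep_one (n : ℕ) (occ : Finset ℕ) (a : ℕ) (back : Bool) :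
    naplesStep n 1 occ a back =
      if a ∉ occ then some a
      else if back = true ∧ 2 ≤ a ∧ a - 1 ∉ occ then some (a - 1)
      else firstFree occ (List.range' (a + 1) (n - a)) := by
  have hbackList : firstFree occ ((List.range' (max (a - 1) 1) (min 1 (a - 1))).reverse) =
      if 2 ≤ a ∧ a - 1 ∉ occ then some (a - 1) else none := by
    rcases Nat.lt_or_ge a 2 with ha | ha
    · rw [show min 1 (a - 1) = 0 by omega, if_neg (by omega)]
      rfl
    · rw [show max (a - 1) 1 = a - 1 by omega, show min 1 (a - 1) = 1 by omega]
      by_cases hocc : a - 1 ∈ occ <;> simp [firstFree, ha, hocc]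
  unfold naplesStep
  rw [hbackList]
  cases back <;> split_ifs <;> simp_all

lemma naplesStep_one_eq_some {n a s : ℕ} {occ : Finset ℕ} {back : Bool} (ha1 : 1 ≤ a)
    (han : a ≤ n) (h : naplesStep n 1 occ a back = some s) :
    s ∉ occ ∧ 1 ≤ s ∧ s ≤ n ∧ a - 1 ≤ s ∧ (s ≠ a → a ∈ occ) := by
  rw [naplesStep_one] at h
  by_cases haocc : a ∈ occ
  · rw [if_neg (not_not.mpr haocc)] at h
    by_cases hback : back = true ∧ 2 ≤ a ∧ a - 1 ∉ occ
    · rw [if_pos hback, Option.some_inj] at h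
      subst h
      exact ⟨hback.2.2, by omega, by omega, le_rfl, fun _ => haocc⟩
    · rw [if_neg hback] at h
      obtain ⟨hs, has, hsn, -⟩ := firstFree_range'_eq_some h
      exact ⟨hs, by omega, by omega, by omega, fun _ => haocc⟩
  · rw [if_pos haocc, Option.some_inj] at h
    subst h
    exact ⟨haocc, ha1, han, by omega, fun h => absurd rfl h⟩

lemma naplesStep_one_eq_none {n a : ℕ} {occ : Finset ℕ} {back : Bool} (ha1 : 1 ≤ a)
    (han : a ≤ n) (hfull : Icc (max (a - 1) 1) n ⊆ occ) : naplesStep n 1 occ a back = none := by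
  have hmem : ∀ x, max (a - 1) 1 ≤ x → x ≤ n → x ∈ occ := fun x h1 h2 =>
    hfull (mem_Icc.mpr ⟨h1, h2⟩)
  rw [naplesStep_one, if_neg (not_not.mpr (hmem a (by omega) han)),
    if_neg fun h => h.2.2 (hmem (a - 1) (by omega) (by omega))]
  exact List.find?_eq_none.mpr fun x hx => by
    rw [List.mem_range'_1] at hx
    simpa using hmem x (by omega) (by omega)

lemma exists_naplesStep_back_tailLE {n a sB : ℕ} {A B : Finset ℕ} {back : Bool}
    (hAB : TailLE A B) (hBn : ∀ x ∈ B, x ≤ n) (ha1 : 1 ≤ a) (han : a ≤ n)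
    (hB : naplesStep n 1 B a back = some sB) :
    ∃ sA, naplesStep n 1 A a true = some sA ∧ TailLE (insert sA A) (insert sB B) := by
  obtain ⟨hsB, hsB1, -, hasB, haB⟩ := naplesStep_one_eq_some ha1 han hB
  rw [naplesStep_one]
  by_cases haA : a ∈ A
  swap
  · refine ⟨a, if_pos haA, hAB.insert haA hsB fun j hj hja => ?_⟩
    obtain rfl : j = a := by omega
    exact tailCount_lt_of_notMem_of_mem haA (haB (by omega)) (hAB _)
  rw [if_neg (not_not.mpr haA)]
  by_cases hback : 2 ≤ a ∧ a - 1 ∉ A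
  · exact ⟨a - 1, if_pos ⟨rfl, hback⟩, hAB.insert hback.2 hsB fun j hj hja => by omega⟩
  rw [if_neg fun h => hback h.2]
  have hlow : ∀ x, max (a - 1) 1 ≤ x → x ≤ a → x ∈ A := fun x hx hxa => by
    obtain rfl | rfl : x = a - 1 ∨ x = a := by omega
    · by_contra h
      exact hback ⟨by omega, h⟩
    · exact haA
  cases hA : firstFree A (List.range' (a + 1) (n - a)) with
  | none =>
    have hAfull : Icc (max (a - 1) 1) n ⊆ A := fun x hx => by
      rw [mem_Icc] at hx
      rcases Nat.lt_or_ge a x with hax | hax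
      · exact firstFree_range'_eq_none hA x hax (by omega)
      · exact hlow x hx.1 hax
    have hBfull := Icc_subset_of_tailCount_le hBn hAfull (hAB _)
    rw [naplesStep_one_eq_none ha1 han hBfull] at hB
    cases hB
  | some sA =>
    obtain ⟨hsA, hasA, -, hbefore⟩ := firstFree_range'_eq_some hA
    refine ⟨sA, rfl, hAB.insert hsA hsB fun j hj hja => ?_⟩
    refine tailCount_lt_of_Ico_subset (b := min a sB) (by omega) (fun x hx => ?_)
      (mem_Ico.mpr ⟨by omega, hj⟩) hsB (hAB _)
    rw [mem_Ico] at hx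
    rcases Nat.lt_or_ge a x with hax | hax
    · exact hbefore x hax (by omega)
    · exact hlow x (by omega) hax

lemma runPark_naplesStep_back_of_tailLE {n : ℕ} (l : List (ℕ × Bool))
    (hl : ∀ x ∈ l, 1 ≤ x.1 ∧ x.1 ≤ n) {A B : Finset ℕ} (hAB : TailLE A B)
    (hBn : ∀ x ∈ B, x ≤ n) (h : runPark (naplesStep n 1) l B = true) :
    runPark (naplesStep n 1) (l.map fun x => (x.1, true)) A = true := by
  induction l generalizing A B with
  | nil => rfl
  | cons x l ih =>
    obtain ⟨a, back⟩ := x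
    obtain ⟨ha1, han⟩ := hl (a, back) List.mem_cons_self
    cases hB : naplesStep n 1 B a back with
    | none => simp [runPark, hB] at h
    | some sB =>
      simp only [runPark, hB] at h
      obtain ⟨sA, hA, hAB'⟩ := exists_naplesStep_back_tailLE hAB hBn ha1 han hB
      have hsBn := (naplesStep_one_eq_some ha1 han hB).2.2.1
      simp only [List.map_cons, runPark, hA]
      exact ih (fun y hy => hl y (List.mem_cons_of_mem _ hy)) hAB'
        (fun y hy => (mem_insert.mp hy).elim (· ▸ hsBn) (hBn y)) h

theorem naplesParks_of_parksNaples {n : ℕ} {α : Fin n → ℕ} (hα : ∀ i, 1 ≤ α i ∧ α i ≤ n)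
    (b : Fin n → Bool) (h : parksNaples n 1 α b = true) : naplesParks n α = true := by
  have hl : ∀ x ∈ List.ofFn (fun i => (α i, b i)), 1 ≤ x.1 ∧ x.1 ≤ n := by
    simp only [List.mem_ofFn, forall_exists_index]
    rintro _ i rfl
    exact hα i
  simpa [naplesParks, parksNaples, List.map_ofFn, Function.comp_def] using
    runPark_naplesStep_back_of_tailLE _ hl tailLE_empty (by simp) h

theorem probNaples_pos_iff {n k : ℕ} {p : ℝ} (hp0 : 0 < p) (hp1 : p < 1) (α : Fin n → ℕ) :
    0 < probNaples n k p α ↔ ∃ b, parksNaples n k α b = true := by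
  have hweight : ∀ b : Fin n → Bool, 0 < ∏ i, if b i then p else 1 - p := fun b =>
    prod_pos fun i _ => by split_ifs <;> linarith
  unfold probNaples
  rw [sum_pos_iff_of_nonneg fun b _ => mul_nonneg (hweight b).le (by split_ifs <;> norm_num)]
  refine exists_congr fun b => ?_
  by_cases hb : parksNaples n k α b = true <;> simp [hb, hweight b]

end NaplesParking

theorem stmt6_general (n : ℕ) (α : Fin n → Fin n) :
    0 < probNaples n 1 (1/2) (fun i => (α i).1 + 1) ↔
      naplesParks n (fun i => (α i).1 + 1) = true := by
  rw [NaplesParking.probNaples_pos_iff (by norm_num) (by norm_num)]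
  exact ⟨fun ⟨b, hb⟩ => NaplesParking.naplesParks_of_parksNaples
      (fun i => ⟨Nat.le_add_left 1 _, (α i).2⟩) b hb,
    fun h => ⟨fun _ => true, h⟩⟩

/-- `α` parks with positive probability in the random 1-Naples model with `p = 1/2` iff
`α` is a 1-Naples parking function. -/
theorem stmt6 (n : ℕ) (hn : 0 < n) (α : Fin n → Fin n) :
    0 < probNaples n 1 (1/2) (fun i => (α i).1 + 1) ↔
      naplesParks n (fun i => (α i).1 + 1) = true :=
  stmt6_general n α
end

section
/- If α is the constant tuple (2,2,...,2) of length n ≥ 2, then g(α) = 2^{n−1} − 1; i.e., the only choice sequence under which α fails to park is β = (1,1,...,1). -/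
/-! The first car takes spot 2. As long as no car has backed up, the occupied spots form a block
`2,…,j`, and a car searching forward takes `j + 1`; the first car that backs up takes spot 1, and
from then on the occupied spots form a block `1,…,m`, so every later car takes `m + 1`. Hence all
cars park iff some car backs up: otherwise the `n - 1` later cars compete for the `n - 2` spots
`3,…,n`. -/

open Finset

lemma firstFree_Icc_range' {t j st : ℕ} (ht : t ≤ st) (hst : st ≤ j + 1) (len : ℕ) :
    firstFree (Icc t j) (List.range' st len) =
      if j + 1 < st + len then some (j + 1) else none := by
  induction len generalizing st with
  | zero => simp [firstFree]; omega
  | succ len ih =>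
    rw [firstFree, List.range'_succ]
    by_cases h : st ≤ j
    · rw [List.find?_cons_of_neg (by simp; omega), ← firstFree, ih (by omega) (by omega),
        Nat.add_right_comm st 1 len, Nat.add_assoc]
    · rw [List.find?_cons_of_pos (by simp; omega), if_pos (by omega)]
      congr
      omega

lemma naplesStep_two_of_one_free {n j : ℕ} (hj : 2 ≤ j) (back : Bool) :
    naplesStep n 1 (Icc 2 j) 2 back =
      if back then some 1 else if j < n then some (j + 1) else none := by
  have hfwd := firstFree_Icc_range' (t := 2) (j := j) (st := 3) (by omega) (by omega) (n - 2)
  have hback : firstFree (Icc 2 j) [1] = some 1 := by simp [firstFree]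
  cases back <;> simp [naplesStep, hj, hfwd, hback, show j + 1 < 3 + (n - 2) ↔ j < n by omega]

lemma naplesStep_two_of_one_taken {n m : ℕ} (hm : 2 ≤ m) (back : Bool) :
    naplesStep n 1 (Icc 1 m) 2 back = if m < n then some (m + 1) else none := by
  have hfwd := firstFree_Icc_range' (t := 1) (j := m) (st := 3) (by omega) (by omega) (n - 2)
  have hback : firstFree (Icc 1 m) [1] = none := by simp [firstFree]; omega
  cases back <;> simp [naplesStep, hm, hfwd, hback, show m + 1 < 3 + (n - 2) ↔ m < n by omega]

lemma runPark_two_of_one_taken {n : ℕ} (backs : List Bool) {m : ℕ} (hm : 2 ≤ m)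
    (hlen : m + backs.length = n) :
    runPark (naplesStep n 1) (backs.map (2, ·)) (Icc 1 m) = true := by
  induction backs generalizing m with
  | nil => rfl
  | cons back backs ih =>
    rw [List.length_cons] at hlen
    rw [List.map_cons, runPark, naplesStep_two_of_one_taken hm, if_pos (by omega)]
    dsimp only
    rw [insert_Icc_right_eq_Icc_add_one (by omega)]
    exact ih (by omega) (by omega)

lemma runPark_two_of_one_free {n : ℕ} (backs : List Bool) {j : ℕ} (hj : 2 ≤ j) (hjn : j ≤ n)
    (hlen : j + backs.length = n + 1) :
    runPark (naplesStep n 1) (backs.map (2, ·)) (Icc 2 j) = backs.any id := by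
  induction backs generalizing j with
  | nil => simp at hlen; omega
  | cons back backs ih =>
    rw [List.length_cons] at hlen
    rw [List.map_cons, runPark, naplesStep_two_of_one_free hj]
    cases back with
    | true =>
      have hins : insert 1 (Icc 2 j) = Icc 1 j := insert_Icc_add_one_left_eq_Icc (by omega)
      rw [if_pos rfl]
      dsimp only
      rw [hins, runPark_two_of_one_taken backs hj (by omega)]
      simp
    | false =>
      rw [if_neg (by simp)]
      by_cases hjn' : j < n
      · rw [if_pos hjn']
        dsimp only
        rw [insert_Icc_right_eq_Icc_add_one (by omega), ih (j := j + 1) (by omega) hjn' (by omega)]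
        simp
      · obtain rfl : backs = [] := List.eq_nil_of_length_eq_zero (by omega)
        simp [hjn']

lemma parksUnder_const_two_iff (m : ℕ) (β : Fin (m + 1) → Bool) :
    parksUnder (m + 2) (fun _ => 2) β = true ↔ β ≠ fun _ => true := by
  have hcars : (List.ofFn fun i : Fin (m + 2) => ((2 : ℕ),
      if h : 0 < i.1 then !β ⟨i.1 - 1, by omega⟩ else false)) =
      (2, false) :: (List.ofFn fun i => !β i).map (2, ·) := by
    rw [List.ofFn_succ, List.map_ofFn]
    rfl
  have hfirst : insert 2 (∅ : Finset ℕ) = Icc 2 2 := by simp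
  rw [parksUnder, parksNaples, hcars, runPark, naplesStep, if_pos (by simp)]
  dsimp only
  rw [hfirst, runPark_two_of_one_free _ le_rfl (by omega) (by simp; omega)]
  simp [funext_iff, Fin.exists_fin_succ]

/-- For the constant tuple `(2,2,…,2)` of length `n ≥ 2`, `g = 2^(n-1) - 1`; the unique
failing choice sequence is the all-ones one. -/
theorem stmt8 (n : ℕ) (hn : 2 ≤ n) :
    g n (fun _ => 2) = 2 ^ (n - 1) - 1 ∧
    ∀ β : Fin (n - 1) → Bool,
      parksUnder n (fun _ => 2) β = false ↔ β = fun _ => true := by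
  obtain ⟨m, rfl⟩ : ∃ m, n = m + 2 := ⟨n - 2, by omega⟩
  have hparks : univ.filter (fun β => parksUnder (m + 2) (fun _ => 2) β = true) =
      univ.erase fun _ => true := by
    ext β
    simp [parksUnder_const_two_iff m β]
  refine ⟨?_, fun β => ?_⟩
  · rw [g, hparks, card_erase_of_mem (mem_univ _), card_univ]
    simp
  · rw [← Bool.not_eq_true, parksUnder_const_two_iff m β]
    exact not_not
end

section
/- For n ≥ 2, if g(α) is odd for α ∈ {1,...,n}^n, then α satisfies: α_1 = α_2, α_{i+1} ∈ {α_i − 1, α_i} for all 1 ≤ i ≤ n−1, and α_n = 2. -/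
/-!
Count coin sequences recursively, car by car. As long as the occupied spots form an interval
`[l, r]`, a car's coin matters only if it prefers the left end `l ≥ 2`: backing up occupies
`l - 1`, going forward occupies `r + 1`, and both keep the occupied set an interval. Any other
car parks in the same spot for both coin values, so it doubles the count. Hence an odd count
forces every car after the first to prefer the current left end, which moves left by `0` or `1`
at each step and has to reach spot `1` when the last car parks.
-/

open Finset

def countParking (step : Finset ℕ → ℕ → Bool → Option ℕ) : List ℕ → Finset ℕ → ℕ
  | [], _ => 1
  | a :: rest, occ =>
    (step occ a true).elim 0 (fun s => countParking step rest (insert s occ)) +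
    (step occ a false).elim 0 (fun s => countParking step rest (insert s occ))

theorem card_filter_runPark_eq_countParking (step : Finset ℕ → ℕ → Bool → Option ℕ) :
    ∀ {m : ℕ} (p : Fin m → ℕ) (occ : Finset ℕ),
      #{β : Fin m → Bool | runPark step (List.ofFn fun i => (p i, β i)) occ} =
        countParking step (List.ofFn p) occ
  | 0, p, occ => by simp [runPark, countParking]
  | m + 1, p, occ => by
    have hsplit : ∀ b : Bool,
        (∑ γ : Fin m → Bool, if runPark step ((p 0, b) ::
          List.ofFn fun i => (p i.succ, γ i)) occ then 1 else 0) =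
        (step occ (p 0) b).elim 0
          (fun s => countParking step (List.ofFn fun i => p i.succ) (insert s occ)) := by
      intro b
      rcases hstep : step occ (p 0) b with _ | s
      · simp [runPark, hstep]
      · simp only [runPark, hstep, Option.elim]
        rw [← card_filter_runPark_eq_countParking step _ (insert s occ), card_filter]
    rw [card_filter, ← (Fin.consEquiv fun _ => Bool).sum_comp, Fintype.sum_prod_type,
      Fintype.sum_bool, List.ofFn_succ, countParking]
    simp only [Fin.consEquiv_apply, Fin.cons_zero, Fin.cons_succ, List.ofFn_succ]
    rw [hsplit, hsplit]

theorem even_countParking_cons {step : Finset ℕ → ℕ → Bool → Option ℕ} {occ : Finset ℕ}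
    {a : ℕ} (h : step occ a true = step occ a false) (rest : List ℕ) :
    Even (countParking step (a :: rest) occ) := by
  rw [countParking, h]
  exact ⟨_, rfl⟩

theorem naplesStep_one_of_mem {n a : ℕ} {occ : Finset ℕ} (ha : a ∈ occ) (back : Bool) :
    naplesStep n 1 occ a back =
      if back ∧ 2 ≤ a ∧ a - 1 ∉ occ then some (a - 1)
      else firstFree occ (List.range' (a + 1) (n - a)) := by
  rw [naplesStep, if_neg (not_not_intro ha)]
  cases back
  · simp
  · by_cases h2 : 2 ≤ a
    · have hlist : (List.range' (max (a - 1) 1) (min 1 (a - 1))).reverse = [a - 1] := by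
        rw [min_eq_left (by omega), max_eq_left (by omega)]
        rfl
      by_cases hfree : a - 1 ∈ occ <;> simp [hlist, firstFree, hfree, h2]
    · have hlist : (List.range' (max (a - 1) 1) (min 1 (a - 1))).reverse = [] := by
        rw [min_eq_right (by omega)]
        simp only [List.reverse_eq_nil_iff, List.range'_eq_nil_iff]
        omega
      simp [hlist, firstFree, h2]

theorem naplesStep_one_true_eq_false {n a : ℕ} {occ : Finset ℕ}
    (h : ¬(a ∈ occ ∧ 2 ≤ a ∧ a - 1 ∉ occ)) :
    naplesStep n 1 occ a true = naplesStep n 1 occ a false := by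
  by_cases ha : a ∈ occ
  · simp only [naplesStep_one_of_mem ha]
    rw [if_neg (by tauto), if_neg (by simp)]
  · simp [naplesStep, ha]

theorem firstFree_Icc_range'_s9 {n l r a : ℕ} (hla : l ≤ a) (har : a ≤ r) (hrn : r ≤ n) :
    firstFree (Icc l r) (List.range' (a + 1) (n - a)) =
      if r < n then some (r + 1) else none := by
  have hsplit : List.range' (a + 1) (n - a) =
      List.range' (a + 1) (r - a) ++ List.range' (r + 1) (n - r) := by
    rw [show r + 1 = a + 1 + (r - a) by omega, List.range'_append_1]
    congr 1
    omega
  have hocc : (List.range' (a + 1) (r - a)).find? (fun s => decide (s ∉ Icc l r)) = none := by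
    rw [List.find?_eq_none]
    intro x hx
    simp only [List.mem_range'_1] at hx
    simp only [mem_Icc, decide_eq_true_eq, not_not]
    omega
  rw [firstFree, hsplit, List.find?_append, hocc, Option.none_or]
  split_ifs with hr
  · rw [show n - r = (n - r - 1) + 1 by omega, List.range'_succ, List.find?_cons_of_pos]
    simp
  · rw [show n - r = 0 by omega]
    rfl

/-- The evolution of the left end of the occupied interval along a run in which every car
prefers the current left end. -/
inductive StairFrom : ℕ → List ℕ → Prop
  | nil : StairFrom 1 []
  | cons {l l' : ℕ} {rest : List ℕ} (hl : 2 ≤ l) (hl' : l' = l ∨ l' + 1 = l) :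
      StairFrom l' rest → StairFrom l (l :: rest)

namespace StairFrom

theorem head_eq {l a : ℕ} {rest : List ℕ} (h : StairFrom l (a :: rest)) : a = l := by
  cases h
  rfl

theorem isChain {l : ℕ} {prefs : List ℕ} (h : StairFrom l prefs) :
    (l :: prefs).IsChain (fun a b => b = a ∨ b + 1 = a) := by
  induction h with
  | nil => exact List.isChain_singleton 1
  | @cons l l' rest _ hl' hrest ih =>
    refine List.IsChain.cons_cons (Or.inl rfl) ?_
    cases rest with
    | nil => exact List.isChain_singleton l
    | cons b rest =>
      obtain rfl := hrest.head_eq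
      exact List.IsChain.cons_cons hl' (List.isChain_cons_cons.mp ih).2

theorem getLast_eq_two {l : ℕ} {prefs : List ℕ} (h : StairFrom l prefs) (hne : prefs ≠ []) :
    prefs.getLast hne = 2 := by
  induction h with
  | nil => exact absurd rfl hne
  | @cons l l' rest hl hl' hrest ih =>
    cases rest with
    | nil =>
      cases hrest
      simp only [List.getLast_singleton]
      omega
    | cons b rest => rw [List.getLast_cons (List.cons_ne_nil b rest), ih]

end StairFrom

theorem stairFrom_of_odd_countParking {n : ℕ} :
    ∀ (prefs : List ℕ) {l r : ℕ}, 1 ≤ l → l ≤ r → r ≤ n → r + 1 + prefs.length = n + l →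
      Odd (countParking (naplesStep n 1) prefs (Icc l r)) → StairFrom l prefs
  | [], l, r, h1l, hlr, hrn, hlen, _ => by
    obtain rfl : l = 1 := by simp only [List.length_nil] at hlen; omega
    exact .nil
  | a :: rest, l, r, h1l, hlr, hrn, hlen, hodd => by
    by_cases hrel : a ∈ Icc l r ∧ 2 ≤ a ∧ a - 1 ∉ Icc l r
    swap
    · exact absurd hodd
        (Nat.not_odd_iff_even.mpr (even_countParking_cons (naplesStep_one_true_eq_false hrel) _))
    obtain ⟨ha, h2a, hfree⟩ := hrel
    simp only [mem_Icc] at ha hfree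
    obtain rfl : a = l := by omega
    simp only [List.length_cons] at hlen
    have hcount : countParking (naplesStep n 1) (a :: rest) (Icc a r) =
        countParking (naplesStep n 1) rest (Icc (a - 1) r) +
          if r < n then countParking (naplesStep n 1) rest (Icc a (r + 1)) else 0 := by
      rw [countParking, naplesStep_one_of_mem (left_mem_Icc.mpr hlr),
        naplesStep_one_of_mem (left_mem_Icc.mpr hlr),
        if_pos ⟨rfl, h2a, by rw [mem_Icc]; omega⟩, if_neg (by simp),
        firstFree_Icc_range'_s9 le_rfl hlr hrn]
      split_ifs <;>
        simp only [Option.elim, insert_Icc_left_eq_Icc_sub_one (by omega : a - 1 ≤ r),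
          insert_Icc_right_eq_Icc_add_one (by omega : a ≤ r + 1), add_zero]
    rw [hcount] at hodd
    rcases Nat.even_or_odd (countParking (naplesStep n 1) rest (Icc (a - 1) r)) with hev | hback
    · have hfwd : Odd (if r < n then countParking (naplesStep n 1) rest (Icc a (r + 1)) else 0) :=
        (Nat.odd_add'.mp hodd).mpr hev
      split_ifs at hfwd with hr
      · exact .cons h2a (Or.inl rfl)
          (stairFrom_of_odd_countParking rest h1l (by omega) hr (by omega) hfwd)
      · exact absurd hfwd Nat.not_odd_zero
    · exact .cons h2a (Or.inr (by omega))
        (stairFrom_of_odd_countParking rest (by omega) (by omega) hrn (by omega) hback)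

theorem g_eq_countParking (m : ℕ) (α : Fin (m + 1) → ℕ) :
    g (m + 1) α = countParking (naplesStep (m + 1) 1) (List.ofFn fun i => α i.succ) {α 0} := by
  have hunder : ∀ β : Fin m → Bool, parksUnder (m + 1) α β =
      runPark (naplesStep (m + 1) 1) (List.ofFn fun i => (α i.succ, !β i)) {α 0} := by
    intro β
    simp [parksUnder, parksNaples, List.ofFn_succ, runPark, naplesStep]
  change #{β : Fin m → Bool | parksUnder (m + 1) α β} = _
  simp only [hunder, ← card_filter_runPark_eq_countParking]
  refine card_equiv (Equiv.piCongrRight fun _ => Equiv.boolNot) ?_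
  simp

theorem staircase_of_stairFrom {m : ℕ} (hn : 2 ≤ m + 1) (α : Fin (m + 1) → ℕ)
    (h : StairFrom (α 0) (List.ofFn fun i => α i.succ)) : Staircase hn α := by
  obtain ⟨k, rfl⟩ : ∃ k, m = k + 1 := ⟨m - 1, by omega⟩
  have hchain := h.isChain
  rw [← List.ofFn_succ, List.isChain_ofFn] at hchain
  refine ⟨?_, hchain, ?_⟩
  · rw [List.ofFn_succ] at h
    exact h.head_eq.symm
  · rw [← h.getLast_eq_two (by simp), List.getLast_ofFn]
    rfl

/-- If `g(α)` is odd then `α` is a staircase tuple. -/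
theorem stmt9 (n : ℕ) (hn : 2 ≤ n) (α : Fin n → ℕ)
    (hα : ∀ i, 1 ≤ α i ∧ α i ≤ n) (hodd : Odd (g n α)) :
    Staircase hn α := by
  obtain ⟨m, rfl⟩ : ∃ m, n = m + 1 := ⟨n - 1, by omega⟩
  rw [g_eq_countParking, ← Icc_self] at hodd
  exact staircase_of_stairFrom hn α
    (stairFrom_of_odd_countParking _ (hα 0).1 le_rfl (hα 0).2 (by simp; omega) hodd)
end
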